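/- arXiv:1812.04263 — 2 statements merged into one kernel-verified Lean document; each statement's English description precedes it below -/
import Mathlib

section
/- If a graph G admits a circular layout in which at most one bundled crossing occurs, then removing the (at most 8) endpoints of the at most 4 frame edges leaves a graph all of whose components are outerplanar; consequently G has treewidth at most 10. -/
open SimpleGraph

/-- `b` lies strictly between `a` and `c`. -/
def StrictBtw (a b c : ℕ) : Prop := min a c < b ∧ b < max a c

/-- With vertices placed on a circle according to `f` (cutting the circle open to a line),
two chords cross iff their endpoints interleave: exactly one of `x, y` lies between `u, v`. -/
def ChordsCross {V : Type} (f : V → ℕ) (u v x y : V) : Prop :=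
  Xor' (StrictBtw (f u) (f x) (f v)) (StrictBtw (f u) (f y) (f v))

def EdgesCross {V : Type} (f : V → ℕ) (e e' : Sym2 V) : Prop :=
  ∃ u v x y : V, e = s(u, v) ∧ e' = s(x, y) ∧
    u ≠ x ∧ u ≠ y ∧ v ≠ x ∧ v ≠ y ∧ ChordsCross f u v x y

/-- `G` is outerplanar: it has a circular (one-page) layout with no crossing chords. -/
def Outerplanar {V : Type} (G : SimpleGraph V) : Prop :=
  ∃ f : V → ℕ, Function.Injective f ∧
    ∀ e ∈ G.edgeSet, ∀ e' ∈ G.edgeSet, ¬ EdgesCross f e e'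

/-- `G` admits a circular layout whose crossings can be grouped into at most `k`
bundled crossings: each bundled crossing is a pair of bundles of edges, edges within a
bundle are pairwise non-crossing, any two edges from opposite bundles of a bundled
crossing cross, and every crossing pair of edges is covered by some bundled crossing. -/
def CircBundledLE {V : Type} (G : SimpleGraph V) (k : ℕ) : Prop :=
  ∃ f : V → ℕ, Function.Injective f ∧
  ∃ bundles : Fin k → Set (Sym2 V) × Set (Sym2 V),
    (∀ i, (bundles i).1 ⊆ G.edgeSet ∧ (bundles i).2 ⊆ G.edgeSet) ∧
    (∀ i, ∀ e ∈ (bundles i).1, ∀ e' ∈ (bundles i).1, ¬ EdgesCross f e e') ∧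
    (∀ i, ∀ e ∈ (bundles i).2, ∀ e' ∈ (bundles i).2, ¬ EdgesCross f e e') ∧
    (∀ i, ∀ e ∈ (bundles i).1, ∀ e' ∈ (bundles i).2, EdgesCross f e e') ∧
    (∀ e ∈ G.edgeSet, ∀ e' ∈ G.edgeSet, EdgesCross f e e' →
      ∃ i, (e ∈ (bundles i).1 ∧ e' ∈ (bundles i).2) ∨
           (e' ∈ (bundles i).1 ∧ e ∈ (bundles i).2))

structure TreeDecomposition {V : Type} (G : SimpleGraph V) where
  ι : Type
  tree : SimpleGraph ι
  isTree : tree.IsTree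
  bag : ι → Set V
  mem_bag : ∀ v : V, ∃ i, v ∈ bag i
  edge_bag : ∀ ⦃u v : V⦄, G.Adj u v → ∃ i, u ∈ bag i ∧ v ∈ bag i
  bag_connected : ∀ v : V, (tree.induce {i | v ∈ bag i}).Connected

/-- `G` has treewidth at most `t`: some tree decomposition has all bags of size `≤ t+1`. -/
def TreewidthLE {V : Type} (G : SimpleGraph V) (t : ℕ) : Prop :=
  ∃ T : TreeDecomposition G, ∀ i, Nat.card (T.bag i) ≤ t + 1

/-!
Every crossing is between an edge of the first bundle `A` and one of the second bundle `B`.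
Fix an edge `xy` of `B`. Every edge of `A` crosses it, so it leaves the arc from `x` to `y` at
one endpoint; let `pp'` and `qq'` be the edges of `A` leaving it first and last. These two
non-crossing chords cut out a region `R` of the disk. Every edge of `A` not touching them lies
in `R`, while every edge of `B` crosses both of them and so has no endpoint in `R`. An edge
leaving `R` would cross `pp'` or `qq'`, hence lie in `B`; so once the endpoints of `pp'` and
`qq'` are deleted, `R` is a union of components, and no component contains both an edge of `A`
and an edge of `B`. Hence the given layout draws every component without crossings.

For the treewidth, place the components one after another to get a crossing-free layout of
the whole remaining graph. A crossing-free layout on a line gives a tree decomposition of width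
2: split the interval `[a, b]` at a point `s` that no edge other than `ab` jumps over, take the
bag `{a, s, b}` and recurse on `[a, s]` and `[s, b]`. Adding the at most eight deleted vertices
to every bag gives width at most 10.
-/

section Chords

variable {V : Type} {f : V → ℕ}

variable (f) in
def SameSide (u v z w : V) : Prop :=
  StrictBtw (f u) (f z) (f v) ↔ StrictBtw (f u) (f w) (f v)

lemma chordsCross_iff_not_sameSide {u v x y : V} :
    ChordsCross f u v x y ↔ ¬ SameSide f u v x y :=
  xor_iff_not_iff _ _

lemma chordsCross_comm_left {u v x y : V} : ChordsCross f u v x y ↔ ChordsCross f v u x y := by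
  simp only [ChordsCross, StrictBtw, min_comm, max_comm]

lemma chordsCross_comm_right {u v x y : V} : ChordsCross f u v x y ↔ ChordsCross f u v y x :=
  (xor_comm _ _).to_iff

lemma edgesCross_mk_iff {u v x y : V} :
    EdgesCross f s(u, v) s(x, y) ↔
      u ≠ x ∧ u ≠ y ∧ v ≠ x ∧ v ≠ y ∧ ChordsCross f u v x y := by
  refine ⟨?_, fun ⟨h1, h2, h3, h4, h⟩ => ⟨u, v, x, y, rfl, rfl, h1, h2, h3, h4, h⟩⟩
  rintro ⟨u', v', x', y', he, he', h1, h2, h3, h4, h⟩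
  rw [Sym2.eq_iff] at he he'
  rcases he with ⟨rfl, rfl⟩ | ⟨rfl, rfl⟩ <;> rcases he' with ⟨rfl, rfl⟩ | ⟨rfl, rfl⟩
  · exact ⟨h1, h2, h3, h4, h⟩
  · exact ⟨h2, h1, h4, h3, chordsCross_comm_right.1 h⟩
  · exact ⟨h3, h4, h1, h2, chordsCross_comm_left.1 h⟩
  · exact ⟨h4, h3, h2, h1, chordsCross_comm_left.1 (chordsCross_comm_right.1 h)⟩

lemma not_edgesCross_self (e : Sym2 V) : ¬ EdgesCross f e e := by
  induction e using Sym2.ind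
  simp [edgesCross_mk_iff]

lemma edgesCross_comp_iff {W : Type} {φ : W → V} (hφ : Function.Injective φ) {u v x y : W} :
    EdgesCross (f ∘ φ) s(u, v) s(x, y) ↔ EdgesCross f s(φ u, φ v) s(φ x, φ y) := by
  simp only [edgesCross_mk_iff, hφ.ne_iff]
  rfl

end Chords

lemma SimpleGraph.Connected.induce_image {V W : Type*} {G : SimpleGraph V} {G' : SimpleGraph W}
    (φ : G →g G') {s : Set V} (h : (G.induce s).Connected) : (G'.induce (φ '' s)).Connected :=
  let ψ : G.induce s →g G'.induce (φ '' s) :=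
    ⟨fun x => ⟨φ x, x.1, x.2, rfl⟩, fun hxy => φ.map_adj hxy⟩
  h.map ψ (by rintro ⟨_, x, hx, rfl⟩; exact ⟨⟨x, hx⟩, rfl⟩)

section PrefixTree

variable {α : Type*}

def prefixTree (α : Type*) : SimpleGraph (List α) :=
  SimpleGraph.fromRel fun l l' => ∃ a, l' = l ++ [a]

lemma prefixTree_adj_append (l : List α) (a : α) : (prefixTree α).Adj l (l ++ [a]) :=
  ⟨by simp, Or.inl ⟨a, rfl⟩⟩

def consHom (a : α) : prefixTree α →g prefixTree α where
  toFun := List.cons a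
  map_rel' := by
    rintro l l' ⟨-, ⟨b, rfl⟩ | ⟨b, rfl⟩⟩
    exacts [prefixTree_adj_append (a :: l) b, (prefixTree_adj_append (a :: l') b).symm]

lemma prefixTree_reachable_nil (l : List α) : (prefixTree α).Reachable [] l := by
  induction l with
  | nil => rfl
  | cons a l ih => exact (prefixTree_adj_append [] a).reachable.trans (ih.map (consHom a))

lemma prefixTree_isAcyclic : (prefixTree α).IsAcyclic := by
  refine isAcyclic_iff_forall_adj_isBridge.2 ?_
  suffices h : ∀ (l : List α) (a : α), (prefixTree α).IsBridge s(l, l ++ [a]) by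
    rintro l l' ⟨-, ⟨a, rfl⟩ | ⟨a, rfl⟩⟩
    exacts [h l a, Sym2.eq_swap ▸ h l' a]
  intro l a
  rw [isBridge_iff]
  rintro ⟨p⟩
  -- the vertices below `l ++ [a]` can only be left through the deleted edge
  obtain ⟨d, -, hin, hout⟩ := p.reverse.exists_boundary_dart {m | l ++ [a] <+: m}
    (List.prefix_refl _) (fun h => by simpa using h.length_le)
  obtain ⟨⟨-, ⟨b, hb⟩ | ⟨b, hb⟩⟩, hdel⟩ := d.adj
  · exact hout (hb ▸ hin.trans (List.prefix_append _ _))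
  · rw [Set.mem_ofPred_eq, hb, List.prefix_concat_iff] at hin
    rcases hin with heq | hin
    · obtain ⟨hl, -⟩ := List.append_inj' heq rfl
      refine hdel ⟨?_, d.adj.ne⟩
      change s(d.toProd.1, d.toProd.2) ∈ _
      rw [Set.mem_singleton_iff, hb, ← heq, ← hl]
      exact Sym2.eq_swap
    · exact hout hin

lemma prefixTree_isTree : (prefixTree α).IsTree :=
  ⟨⟨fun l l' => (prefixTree_reachable_nil l).symm.trans (prefixTree_reachable_nil l')⟩,
    prefixTree_isAcyclic⟩

lemma SimpleGraph.Connected.induce_insert_nil_image_cons {T : Set (List α)}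
    (hT : ((prefixTree α).induce T).Connected) (hnil : [] ∈ T) (d : α) :
    ((prefixTree α).induce (insert [] (List.cons d '' T))).Connected := by
  rw [Set.insert_eq]
  refine connected_induce_union (v := []) (w := [d]) ?_ (hT.induce_image (consHom d)).preconnected
    rfl ⟨[], hnil, rfl⟩ (prefixTree_adj_append [] d)
  rw [induce_singleton_eq_top]
  exact connected_top.preconnected

end PrefixTree

section IntervalDecomposition

variable {K : SimpleGraph ℕ}

variable (K) in
def IsNoncrossing : Prop :=
  ∀ ⦃j k j' k' : ℕ⦄, K.Adj j k → K.Adj j' k' → j < j' → j' < k → k < k' → False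

variable (K) in
def IsSplitPoint (a b s : ℕ) : Prop :=
  a < s ∧ s < b ∧ ∀ ⦃j k : ℕ⦄, K.Adj j k → a ≤ j → j < s → s < k → k ≤ b → j = a ∧ k = b

lemma exists_isSplitPoint (hK : IsNoncrossing K) {a b : ℕ} (hab : a + 1 < b) :
    ∃ s, IsSplitPoint K a b s := by
  by_cases hN : {k | a < k ∧ k < b ∧ K.Adj a k}.Nonempty
  · -- split at the last neighbour of `a` before `b`
    obtain ⟨s, ⟨has, hsb, hs⟩, hmax⟩ := Set.exists_max_image _ id
      ((Set.finite_Iio b).subset fun k hk => hk.2.1) hN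
    refine ⟨s, has, hsb, fun j k hjk haj hjs hsk hkb => ?_⟩
    rcases eq_or_lt_of_le haj with rfl | haj
    · refine ⟨rfl, (eq_or_lt_of_le hkb).resolve_right fun hkb => ?_⟩
      have := hmax k ⟨by omega, hkb, hjk⟩
      simp only [id] at this
      omega
    · exact (hK hs hjk haj hjs hsk).elim
  · refine ⟨a + 1, by omega, hab, fun j k hjk haj hjs hsk hkb => ?_⟩
    obtain rfl : j = a := by omega
    exact ⟨rfl, (eq_or_lt_of_le hkb).resolve_right fun hkb => hN ⟨k, by omega, hkb, hjk⟩⟩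

variable (K) in
open Classical in
noncomputable def splitPoint (a b : ℕ) : ℕ :=
  if h : ∃ s, IsSplitPoint K a b s then h.choose else a

lemma splitPoint_mem_Icc {a b : ℕ} (hab : a ≤ b) :
    a ≤ splitPoint K a b ∧ splitPoint K a b ≤ b := by
  unfold splitPoint
  split_ifs with h
  · exact ⟨h.choose_spec.1.le, h.choose_spec.2.1.le⟩
  · exact ⟨le_rfl, hab⟩

lemma isSplitPoint_splitPoint (hK : IsNoncrossing K) {a b : ℕ} (hab : a + 1 < b) :
    IsSplitPoint K a b (splitPoint K a b) := by
  have h := exists_isSplitPoint hK hab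
  rw [splitPoint, dif_pos h]
  exact h.choose_spec

variable (K) in
/-- Bags of a tree decomposition of the interval `[a, b]`: the node `true :: m` (`false :: m`)
is the node `m` of the decomposition of the left (right) half. -/
noncomputable def intervalBag : ℕ → ℕ → List Bool → Set ℕ
  | a, b, [] => {a, b, splitPoint K a b}
  | a, b, true :: m => if a + 1 < b then intervalBag a (splitPoint K a b) m else ∅
  | a, b, false :: m => if a + 1 < b then intervalBag (splitPoint K a b) b m else ∅

lemma intervalBag_subset_Icc (m : List Bool) {a b : ℕ} (hab : a ≤ b) :
    intervalBag K a b m ⊆ Set.Icc a b := by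
  induction m generalizing a b with
  | nil =>
    have := splitPoint_mem_Icc (K := K) hab
    rintro z (rfl | rfl | rfl) <;> simp only [Set.mem_Icc] <;> omega
  | cons d m ih =>
    obtain ⟨h₁, h₂⟩ := splitPoint_mem_Icc (K := K) hab
    cases d <;> simp only [intervalBag] <;> split_ifs
    · exact (ih h₂).trans (Set.Icc_subset_Icc h₁ le_rfl)
    · exact Set.empty_subset _
    · exact (ih h₁).trans (Set.Icc_subset_Icc le_rfl h₂)
    · exact Set.empty_subset _

lemma ncard_intervalBag_le (m : List Bool) (a b : ℕ) : (intervalBag K a b m).ncard ≤ 3 := by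
  induction m generalizing a b with
  | nil =>
    refine (Set.ncard_insert_le _ _).trans ?_
    have := Set.ncard_insert_le b {splitPoint K a b}
    rw [Set.ncard_singleton] at this
    omega
  | cons d m ih => cases d <;> simp only [intervalBag] <;> split_ifs <;> simp [ih]

lemma exists_mem_intervalBag_of_adj (hK : IsNoncrossing K) {j k : ℕ} (hjk : K.Adj j k)
    (a b : ℕ) (haj : a ≤ j) (hlt : j < k) (hkb : k ≤ b) :
    ∃ m, j ∈ intervalBag K a b m ∧ k ∈ intervalBag K a b m := by
  by_cases hend : j = a ∧ k = b
  · exact ⟨[], by simp [intervalBag, hend]⟩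
  have hab : a + 1 < b := by omega
  obtain ⟨has, hsb, hs⟩ := isSplitPoint_splitPoint hK hab
  by_cases hks : k ≤ splitPoint K a b
  · obtain ⟨m, hm⟩ := exists_mem_intervalBag_of_adj hK hjk a (splitPoint K a b) haj hlt hks
    exact ⟨true :: m, by simpa [intervalBag, hab] using hm⟩
  · have hsj : splitPoint K a b ≤ j := by
      by_contra hsj
      exact hend (hs hjk haj (by omega) (by omega) hkb)
    obtain ⟨m, hm⟩ := exists_mem_intervalBag_of_adj hK hjk (splitPoint K a b) b hsj hlt hkb
    exact ⟨false :: m, by simpa [intervalBag, hab] using hm⟩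
termination_by b - a

lemma setOf_mem_intervalBag {a b : ℕ} (hab : a + 1 < b) (z : ℕ) :
    {m | z ∈ intervalBag K a b m} =
      (if z = a ∨ z = b ∨ z = splitPoint K a b then {[]} else ∅) ∪
        (List.cons true '' {m | z ∈ intervalBag K a (splitPoint K a b) m} ∪
          List.cons false '' {m | z ∈ intervalBag K (splitPoint K a b) b m}) := by
  ext m
  rcases m with _ | ⟨_ | _, m⟩ <;> split_ifs <;> simp_all [intervalBag]

lemma setOf_mem_intervalBag_of_not_lt {a b z : ℕ} (hab : ¬ a + 1 < b) (haz : a ≤ z)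
    (hzb : z ≤ b) : {m | z ∈ intervalBag K a b m} = {[]} := by
  ext m
  rcases m with _ | ⟨_ | _, m⟩
  · simp only [intervalBag, Set.mem_ofPred_eq, Set.mem_insert_iff, Set.mem_singleton_iff, iff_true]
    omega
  all_goals simp [intervalBag, hab]

lemma setOf_mem_intervalBag_eq_empty {a b z : ℕ} (hab : a ≤ b) (h : z < a ∨ b < z) :
    {m | z ∈ intervalBag K a b m} = ∅ :=
  Set.eq_empty_of_forall_notMem fun m hm => by
    have := intervalBag_subset_Icc m hab hm
    simp only [Set.mem_Icc] at this
    omega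

lemma intervalBag_connected (hK : IsNoncrossing K) (a b : ℕ) {z : ℕ} (haz : a ≤ z) (hzb : z ≤ b) :
    ((prefixTree Bool).induce {m | z ∈ intervalBag K a b m}).Connected := by
  by_cases hab : a + 1 < b
  swap
  · rw [setOf_mem_intervalBag_of_not_lt hab haz hzb, induce_singleton_eq_top]
    exact connected_top
  obtain ⟨has, hsb, -⟩ := isSplitPoint_splitPoint hK hab
  rw [setOf_mem_intervalBag hab]
  generalize splitPoint K a b = s at has hsb ⊢
  rcases lt_trichotomy z s with hz | rfl | hz
  · have ih := intervalBag_connected hK a s haz hz.le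
    rw [setOf_mem_intervalBag_eq_empty hsb.le (Or.inl hz), Set.image_empty, Set.union_empty]
    rcases eq_or_lt_of_le haz with rfl | haz
    · rw [if_pos (Or.inl rfl), Set.singleton_union]
      exact ih.induce_insert_nil_image_cons (by simp [intervalBag]) true
    · rw [if_neg (by omega), Set.empty_union]
      exact ih.induce_image (consHom true)
  · have ih₁ := intervalBag_connected hK a z haz le_rfl
    have ih₂ := intervalBag_connected hK z b le_rfl hzb
    rw [if_pos (Or.inr (Or.inr rfl)), Set.singleton_union, Set.insert_union_distrib]
    exact induce_union_connected
      (ih₁.induce_insert_nil_image_cons (by simp [intervalBag]) true).preconnected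
      (ih₂.induce_insert_nil_image_cons (by simp [intervalBag]) false).preconnected
      ⟨[], Set.mem_insert _ _, Set.mem_insert _ _⟩
  · have ih := intervalBag_connected hK s b hz.le hzb
    rw [setOf_mem_intervalBag_eq_empty has.le (Or.inr hz), Set.image_empty, Set.empty_union]
    rcases eq_or_lt_of_le hzb with rfl | hzb
    · rw [if_pos (Or.inr (Or.inl rfl)), Set.singleton_union]
      exact ih.induce_insert_nil_image_cons (by simp [intervalBag]) false
    · rw [if_neg (by omega), Set.empty_union]
      exact ih.induce_image (consHom false)
termination_by b - a

lemma isNoncrossing_map {W : Type} {H : SimpleGraph W} (g : W ↪ ℕ)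
    (h : ∀ e ∈ H.edgeSet, ∀ e' ∈ H.edgeSet, ¬ EdgesCross g e e') : IsNoncrossing (H.map g) := by
  intro j k j' k' hjk hjk' h₁ h₂ h₃
  obtain ⟨u, v, huv, rfl, rfl⟩ := (map_adj g H j k).1 hjk
  obtain ⟨x, y, hxy, rfl, rfl⟩ := (map_adj g H j' k').1 hjk'
  refine h _ huv _ hxy (edgesCross_mk_iff.2 ⟨?_, ?_, ?_, ?_, Or.inl ⟨?_, ?_⟩⟩) <;>
    first | rintro rfl; omega | simp only [StrictBtw]; omega

end IntervalDecomposition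

lemma Outerplanar.treewidthLE_two {W : Type} [Finite W] {H : SimpleGraph W} (h : Outerplanar H) :
    TreewidthLE H 2 := by
  obtain ⟨g, hg, hH⟩ := h
  have hK := isNoncrossing_map (⟨g, hg⟩ : W ↪ ℕ) hH
  obtain ⟨N, hN⟩ := (Set.finite_range g).bddAbove
  have hgN (w : W) : g w ≤ N := hN ⟨w, rfl⟩
  refine ⟨⟨List Bool, prefixTree Bool, prefixTree_isTree,
    fun m => g ⁻¹' intervalBag (H.map (⟨g, hg⟩ : W ↪ ℕ)) 0 N m, fun w => ?_, fun u v huv => ?_,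
    fun w => intervalBag_connected hK 0 N (Nat.zero_le _) (hgN w)⟩, fun m => ?_⟩
  · obtain ⟨⟨m, hm⟩⟩ := (intervalBag_connected hK 0 N (Nat.zero_le _) (hgN w)).nonempty
    exact ⟨m, hm⟩
  · have hK_adj {u v : W} (huv : H.Adj u v) : (H.map (⟨g, hg⟩ : W ↪ ℕ)).Adj (g u) (g v) :=
      (map_adj _ H _ _).2 ⟨u, v, huv, rfl, rfl⟩
    rcases lt_or_gt_of_ne (hg.ne huv.ne) with hlt | hlt
    · exact exists_mem_intervalBag_of_adj hK (hK_adj huv) 0 N (Nat.zero_le _) hlt (hgN v)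
    · obtain ⟨m, hv, hu⟩ :=
        exists_mem_intervalBag_of_adj hK (hK_adj huv.symm) 0 N (Nat.zero_le _) hlt (hgN u)
      exact ⟨m, hu, hv⟩
  · rw [Nat.card_coe_set_eq]
    refine (Set.ncard_le_ncard_of_injOn g (fun _ hw => hw) hg.injOn ?_).trans
      (ncard_intervalBag_le m 0 N)
    exact (Set.finite_Icc 0 N).subset (intervalBag_subset_Icc m (Nat.zero_le N))

lemma TreewidthLE.mono {V : Type} {G : SimpleGraph V} {s t : ℕ} (h : TreewidthLE G s)
    (hst : s ≤ t) : TreewidthLE G t :=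
  let ⟨T, hT⟩ := h
  ⟨T, fun i => (hT i).trans (by omega)⟩

lemma TreewidthLE.of_induce {V : Type} {G : SimpleGraph V} {P : Set V} {k : ℕ}
    (h : TreewidthLE (G.induce P) k) : TreewidthLE G (k + Pᶜ.ncard) := by
  obtain ⟨T, hT⟩ := h
  obtain ⟨i₀⟩ := T.isTree.connected.nonempty
  have mem_bag (v : V) : ∃ i, v ∈ (↑) '' T.bag i ∪ Pᶜ := by
    by_cases hv : v ∈ P
    · obtain ⟨i, hi⟩ := T.mem_bag ⟨v, hv⟩
      exact ⟨i, Or.inl ⟨_, hi, rfl⟩⟩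
    · exact ⟨i₀, Or.inr hv⟩
  refine ⟨⟨T.ι, T.tree, T.isTree, fun i => (↑) '' T.bag i ∪ Pᶜ, mem_bag, fun u v huv => ?_,
    fun v => ?_⟩, fun i => ?_⟩
  · by_cases hu : u ∈ P <;> by_cases hv : v ∈ P
    · obtain ⟨i, hui, hvi⟩ := T.edge_bag (u := ⟨u, hu⟩) (v := ⟨v, hv⟩) huv
      exact ⟨i, Or.inl ⟨_, hui, rfl⟩, Or.inl ⟨_, hvi, rfl⟩⟩
    all_goals first
      | obtain ⟨i, hi⟩ := mem_bag u; exact ⟨i, hi, Or.inr hv⟩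
      | obtain ⟨i, hi⟩ := mem_bag v; exact ⟨i, Or.inr hu, hi⟩
  · by_cases hv : v ∈ P
    · have : {i | v ∈ (↑) '' T.bag i ∪ Pᶜ} = {i | ⟨v, hv⟩ ∈ T.bag i} := by
        ext i
        simp [hv]
      rw [this]
      exact T.bag_connected ⟨v, hv⟩
    · have : {i | v ∈ (↑) '' T.bag i ∪ Pᶜ} = Set.univ := by
        ext i
        simp [hv]
      rw [this]
      exact T.isTree.connected.map (induceUnivIso T.tree).symm.toHom
        (induceUnivIso T.tree).symm.surjective
  · have himage := Set.ncard_image_of_injective (T.bag i) Subtype.val_injective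
    have hunion := Set.ncard_union_le (Subtype.val '' T.bag i) Pᶜ
    have hbag := hT i
    show Nat.card ↥((↑) '' T.bag i ∪ Pᶜ) ≤ k + Pᶜ.ncard + 1
    rw [Nat.card_coe_set_eq] at hbag ⊢
    omega

section Components

variable {W : Type} {H : SimpleGraph W} {g : W → ℕ}

variable (H g) in
def NoCrossingWithinComponents : Prop :=
  ∀ ⦃u v x y : W⦄, H.Adj u v → H.Adj x y → H.Reachable u x → ¬ EdgesCross g s(u, v) s(x, y)

lemma NoCrossingWithinComponents.outerplanar_induce_supp (hg : Function.Injective g)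
    (h : NoCrossingWithinComponents H g) (c : H.ConnectedComponent) :
    Outerplanar (H.induce c.supp) := by
  refine ⟨g ∘ (↑), hg.comp Subtype.val_injective, fun e he e' he' => ?_⟩
  induction e using Sym2.ind with | _ u v => ?_
  induction e' using Sym2.ind with | _ x y => ?_
  rw [edgesCross_comp_iff Subtype.val_injective]
  exact h he he' (ConnectedComponent.exact (u.2.trans x.2.symm))

/-- Components are laid out one after another, in blocks of length `N + 1`. -/
lemma NoCrossingWithinComponents.outerplanar [Finite W] (hg : Function.Injective g)
    (h : NoCrossingWithinComponents H g) : Outerplanar H := by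
  obtain ⟨idx, hidx⟩ := Countable.exists_injective_nat H.ConnectedComponent
  obtain ⟨N, hN⟩ := (Set.finite_range g).bddAbove
  have hgN (w : W) : g w ≤ N := hN ⟨w, rfl⟩
  set g' : W → ℕ := fun w => (N + 1) * idx (H.connectedComponentMk w) + g w with hg'
  refine ⟨g', fun u v huv => hg ?_, fun e he e' he' => ?_⟩
  · have := congrArg (· % (N + 1)) huv
    simpa [hg', Nat.mul_add_mod, Nat.mod_eq_of_lt (Nat.lt_succ_of_le (hgN _))] using this
  induction e using Sym2.ind with | _ u v => ?_
  induction e' using Sym2.ind with | _ x y => ?_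
  rw [edgesCross_mk_iff]
  rintro ⟨h₁, h₂, h₃, h₄, hcr⟩
  have huv : H.connectedComponentMk v = H.connectedComponentMk u :=
    ConnectedComponent.sound (he : H.Adj u v).symm.reachable
  have hxy : H.connectedComponentMk y = H.connectedComponentMk x :=
    ConnectedComponent.sound (he' : H.Adj x y).symm.reachable
  have := hgN u; have := hgN v; have := hgN x; have := hgN y
  by_cases hr : H.Reachable u x
  · have hux : H.connectedComponentMk x = H.connectedComponentMk u :=
      (ConnectedComponent.sound hr).symm
    refine h he he' hr (edgesCross_mk_iff.2 ⟨h₁, h₂, h₃, h₄, ?_⟩)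
    simp only [hg', chordsCross_iff_not_sameSide, SameSide, StrictBtw, huv, hxy, hux] at hcr ⊢
    omega
  · have hne : idx (H.connectedComponentMk u) ≠ idx (H.connectedComponentMk x) :=
      hidx.ne fun hc => hr (ConnectedComponent.exact hc)
    have block {i j : ℕ} (hij : i < j) : (N + 1) * i + (N + 1) ≤ (N + 1) * j := by nlinarith
    rcases lt_or_gt_of_ne hne with hlt | hlt <;> have := block hlt <;>
      simp only [hg', chordsCross_iff_not_sameSide, SameSide, StrictBtw, huv, hxy] at hcr <;>
      omega

end Components

section BundledCrossing

variable {V : Type} {G : SimpleGraph V} {f : V → ℕ} {A B : Set (Sym2 V)}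

variable (G f A B) in
structure IsSingleBundledCrossing : Prop where
  subset_edgeSet : A ⊆ G.edgeSet
  not_edgesCross_left : ∀ e ∈ A, ∀ e' ∈ A, ¬ EdgesCross f e e'
  edgesCross : ∀ e ∈ A, ∀ e' ∈ B, EdgesCross f e e'
  cover : ∀ e ∈ G.edgeSet, ∀ e' ∈ G.edgeSet, EdgesCross f e e' →
    (e ∈ A ∧ e' ∈ B) ∨ (e' ∈ A ∧ e ∈ B)

lemma IsSingleBundledCrossing.mem_right_of_edgesCross (hG : IsSingleBundledCrossing G f A B)
    {e e' : Sym2 V} (he : e ∈ A) (he' : e' ∈ G.edgeSet) (h : EdgesCross f e e') : e' ∈ B := by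
  rcases hG.cover e (hG.subset_edgeSet he) e' he' h with ⟨-, h'⟩ | ⟨-, h'⟩
  · exact h'
  · exact (not_edgesCross_self e (hG.edgesCross e he e h')).elim

lemma exists_eq_mk_lt_of_edgesCross {e e' : Sym2 V} (h : EdgesCross f e e') :
    ∃ x y, e' = s(x, y) ∧ f x < f y := by
  obtain ⟨_, _, x, y, -, rfl, -, -, -, -, hcr⟩ := h
  have hne : f x ≠ f y := fun hxy => by
    simp [chordsCross_iff_not_sameSide, SameSide, hxy] at hcr
  rcases lt_or_gt_of_ne hne with hlt | hlt
  exacts [⟨x, y, rfl, hlt⟩, ⟨y, x, Sym2.eq_swap, hlt⟩]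

variable (f) in
def ExitsArc (x y u v : V) : Prop :=
  f x < f u ∧ f u < f y ∧ (f v < f x ∨ f y < f v)

lemma exists_exitsArc (hf : Function.Injective f) {x y : V} (hxy : f x < f y) {e : Sym2 V}
    (h : EdgesCross f e s(x, y)) : ∃ u v, e = s(u, v) ∧ ExitsArc f x y u v := by
  induction e using Sym2.ind with | _ u v => ?_
  obtain ⟨hux, huy, hvx, hvy, hcr⟩ := edgesCross_mk_iff.1 h
  have := hf.ne hux; have := hf.ne huy; have := hf.ne hvx; have := hf.ne hvy
  simp only [chordsCross_iff_not_sameSide, SameSide, StrictBtw] at hcr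
  by_cases hu : f x < f u ∧ f u < f y
  · exact ⟨u, v, rfl, hu.1, hu.2, by omega⟩
  · exact ⟨v, u, Sym2.eq_swap, by omega, by omega, by omega⟩

variable (f A B) in
structure IsFrame (x y p p' q q' : V) : Prop where
  base_mem : s(x, y) ∈ B
  base_lt : f x < f y
  left_mem : s(p, p') ∈ A
  left_exitsArc : ExitsArc f x y p p'
  right_mem : s(q, q') ∈ A
  right_exitsArc : ExitsArc f x y q q'
  left_le : ∀ u v, s(u, v) ∈ A → ExitsArc f x y u v → f p ≤ f u
  le_right : ∀ u v, s(u, v) ∈ A → ExitsArc f x y u v → f u ≤ f q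

lemma IsSingleBundledCrossing.exists_isFrame [Finite V] (hf : Function.Injective f)
    (hG : IsSingleBundledCrossing G f A B) (hA : A.Nonempty) (hB : B.Nonempty) :
    ∃ x y p p' q q', IsFrame f A B x y p p' q q' := by
  obtain ⟨e, he⟩ := hA
  obtain ⟨e', he'⟩ := hB
  obtain ⟨x, y, rfl, hxy⟩ := exists_eq_mk_lt_of_edgesCross (hG.edgesCross e he _ he')
  have hD : {uv : V × V | s(uv.1, uv.2) ∈ A ∧ ExitsArc f x y uv.1 uv.2}.Nonempty := by
    obtain ⟨u, v, rfl, huv⟩ := exists_exitsArc hf hxy (hG.edgesCross _ he _ he')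
    exact ⟨(u, v), he, huv⟩
  obtain ⟨⟨p, p'⟩, ⟨hpA, hp⟩, hmin⟩ := Set.exists_min_image _ (fun uv => f uv.1) (Set.toFinite _) hD
  obtain ⟨⟨q, q'⟩, ⟨hqA, hq⟩, hmax⟩ := Set.exists_max_image _ (fun uv => f uv.1) (Set.toFinite _) hD
  exact ⟨x, y, p, p', q, q', he', hxy, hpA, hp, hqA, hq,
    fun u v huv hu => hmin (u, v) ⟨huv, hu⟩, fun u v huv hu => hmax (u, v) ⟨huv, hu⟩⟩

variable (f) in
def frameRegion (x y p p' q q' : V) : Set V :=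
  {z | SameSide f p p' z y ∧ SameSide f q q' z x}

variable {x y p p' q q' : V}

lemma IsFrame.mem_frameRegion (hf : Function.Injective f) (hF : IsFrame f A B x y p p' q q')
    {u v : V} (huv : s(u, v) ∈ A) (hu : ExitsArc f x y u v) (hup : u ≠ p) (huq : u ≠ q) :
    u ∈ frameRegion f x y p p' q q' := by
  have hpu := hF.left_le u v huv hu
  have huq' := hF.le_right u v huv hu
  have hp := hF.left_exitsArc
  have hq := hF.right_exitsArc
  have := hf.ne hup; have := hf.ne huq
  simp only [ExitsArc] at hu hp hq
  simp only [frameRegion, SameSide, StrictBtw, Set.mem_ofPred_eq]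
  omega

lemma IsFrame.notMem_frameRegion (hG : IsSingleBundledCrossing G f A B)
    (hF : IsFrame f A B x y p p' q q') {z w : V} (hzw : s(z, w) ∈ B) :
    z ∉ frameRegion f x y p p' q q' := by
  have hp := edgesCross_mk_iff.1 (hG.edgesCross _ hF.left_mem _ hzw)
  have hq := edgesCross_mk_iff.1 (hG.edgesCross _ hF.right_mem _ hzw)
  have hpq : f p = f q ∨ f p = f q' ∨ f p' = f q ∨ f p' = f q' ∨ SameSide f p p' q q' := by
    by_contra! h
    refine hG.not_edgesCross_left _ hF.left_mem _ hF.right_mem (edgesCross_mk_iff.2 ?_)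
    exact ⟨fun e => h.1 (congrArg f e), fun e => h.2.1 (congrArg f e),
      fun e => h.2.2.1 (congrArg f e), fun e => h.2.2.2.1 (congrArg f e),
      chordsCross_iff_not_sameSide.2 h.2.2.2.2⟩
  have hpq_le := hF.left_le q q' hF.right_mem hF.right_exitsArc
  have hpe := hF.left_exitsArc
  have hqe := hF.right_exitsArc
  simp only [ExitsArc] at hpe hqe
  simp only [chordsCross_iff_not_sameSide, SameSide, StrictBtw] at hp hq hpq
  simp only [frameRegion, SameSide, StrictBtw, Set.mem_ofPred_eq]
  omega

lemma IsFrame.mem_frameRegion_of_adj (hG : IsSingleBundledCrossing G f A B)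
    (hF : IsFrame f A B x y p p' q q') {P : Set V}
    (hP : ∀ v ∈ P, v ∉ s(p, p') ∧ v ∉ s(q, q')) {z w : V} (hz : z ∈ P) (hw : w ∈ P)
    (hzw : G.Adj z w) (hzR : z ∈ frameRegion f x y p p' q q') :
    w ∈ frameRegion f x y p p' q q' := by
  by_contra hwR
  have hside : ¬ SameSide f p p' z w ∨ ¬ SameSide f q q' z w := by
    simp only [frameRegion, SameSide, Set.mem_ofPred_eq] at hzR hwR ⊢
    tauto
  obtain ⟨hzp, hzq⟩ := hP z hz
  obtain ⟨hwp, hwq⟩ := hP w hw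
  simp only [Sym2.mem_iff, not_or] at hzp hzq hwp hwq
  refine hF.notMem_frameRegion hG (w := w) ?_ hzR
  rcases hside with h | h
  · refine hG.mem_right_of_edgesCross hF.left_mem hzw (edgesCross_mk_iff.2 ?_)
    exact ⟨Ne.symm hzp.1, Ne.symm hwp.1, Ne.symm hzp.2, Ne.symm hwp.2,
      chordsCross_iff_not_sameSide.2 h⟩
  · refine hG.mem_right_of_edgesCross hF.right_mem hzw (edgesCross_mk_iff.2 ?_)
    exact ⟨Ne.symm hzq.1, Ne.symm hwq.1, Ne.symm hzq.2, Ne.symm hwq.2,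
      chordsCross_iff_not_sameSide.2 h⟩

/-- After deleting the endpoints of the two frame edges, the frame region is a union of
components; the first bundle lies inside it and the second outside. -/
lemma IsFrame.noCrossingWithinComponents (hf : Function.Injective f)
    (hG : IsSingleBundledCrossing G f A B) (hF : IsFrame f A B x y p p' q q') {P : Set V}
    (hP : ∀ v ∈ P, v ∉ s(p, p') ∧ v ∉ s(q, q')) :
    NoCrossingWithinComponents (G.induce P) (f ∘ (↑)) := by
  have hreach {z w : P} (h : (G.induce P).Reachable z w)
      (hz : z.1 ∈ frameRegion f x y p p' q q') : w.1 ∈ frameRegion f x y p p' q q' := by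
    by_contra hw
    obtain ⟨d, -, hd₁, hd₂⟩ := h.some.exists_boundary_dart {v | v.1 ∈ frameRegion f x y p p' q q'}
      hz hw
    exact hd₂ (hF.mem_frameRegion_of_adj hG hP d.fst.2 d.snd.2 d.adj hd₁)
  have key {u v z w : P} (huv : (G.induce P).Adj u v) (huz : (G.induce P).Reachable u z)
      (hA : s(u.1, v.1) ∈ A) (hB : s(z.1, w.1) ∈ B) : False := by
    obtain ⟨a, b, hab, hexit⟩ := exists_exitsArc hf hF.base_lt (hG.edgesCross _ hA _ hF.base_mem)
    have hmem {c : P} (hc : c.1 = a) : c.1 ∈ frameRegion f x y p p' q q' := by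
      obtain ⟨hcp, hcq⟩ := hP c c.2
      simp only [Sym2.mem_iff, not_or] at hcp hcq
      exact hc ▸ hF.mem_frameRegion hf (hab ▸ hA) hexit (hc ▸ hcp.1) (hc ▸ hcq.1)
    refine hF.notMem_frameRegion hG hB (hreach huz ?_)
    rcases Sym2.eq_iff.1 hab with ⟨hu, -⟩ | ⟨-, hv⟩
    · exact hmem hu
    · exact hreach huv.symm.reachable (hmem hv)
  intro u v z w huv hzw huz hcr
  rw [edgesCross_comp_iff Subtype.val_injective] at hcr
  rcases hG.cover _ huv _ hzw hcr with ⟨hA, hB⟩ | ⟨hA, hB⟩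
  · exact key huv huz hA hB
  · exact key hzw huz.symm hA hB

lemma IsSingleBundledCrossing.exists_separating_frame [Finite V] (hf : Function.Injective f)
    (hG : IsSingleBundledCrossing G f A B) :
    ∃ F : Finset (Sym2 V), F.card ≤ 2 ∧ (↑F : Set (Sym2 V)) ⊆ G.edgeSet ∧
      NoCrossingWithinComponents (G.induce {v | ∀ e ∈ F, v ∉ e}) (f ∘ (↑)) := by
  classical
  by_cases hAB : A.Nonempty ∧ B.Nonempty
  · obtain ⟨x, y, p, p', q, q', hF⟩ := hG.exists_isFrame hf hAB.1 hAB.2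
    refine ⟨{s(p, p'), s(q, q')}, Finset.card_le_two, ?_,
      hF.noCrossingWithinComponents hf hG fun v hv => ⟨hv _ (by simp), hv _ (by simp)⟩⟩
    intro e he
    simp only [Finset.coe_insert, Finset.coe_singleton, Set.mem_insert_iff,
      Set.mem_singleton_iff] at he
    rcases he with rfl | rfl
    exacts [hG.subset_edgeSet hF.left_mem, hG.subset_edgeSet hF.right_mem]
  · refine ⟨∅, by simp, by simp, fun u v z w huv hzw _ hcr => ?_⟩
    rw [edgesCross_comp_iff Subtype.val_injective] at hcr
    rcases hG.cover _ huv _ hzw hcr with ⟨hA, hB⟩ | ⟨hA, hB⟩ <;> exact hAB ⟨⟨_, hA⟩, ⟨_, hB⟩⟩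

end BundledCrossing

lemma ncard_compl_setOf_forall_notMem_le {V : Type} (F : Finset (Sym2 V)) :
    {v | ∀ e ∈ F, v ∉ e}ᶜ.ncard ≤ 2 * F.card := by
  have hcompl : {v | ∀ e ∈ F, v ∉ e}ᶜ = ⋃ e ∈ F, {v | v ∈ e} := by
    ext v
    simp
  have hedge (e : Sym2 V) : {v | v ∈ e}.ncard ≤ 2 := by
    induction e using Sym2.ind with | _ a b => ?_
    have : {v | v ∈ s(a, b)} = {a, b} := by
      ext v
      simp
    rw [this]
    exact (Set.ncard_insert_le _ _).trans (by simp)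
  rw [hcompl]
  refine (F.set_ncard_biUnion_le _).trans ?_
  calc ∑ e ∈ F, {v | v ∈ e}.ncard ≤ ∑ _e ∈ F, 2 := Finset.sum_le_sum fun e _ => hedge e
    _ = 2 * F.card := by rw [Finset.sum_const, smul_eq_mul, mul_comm]

/-- If `G` admits a circular layout with at most one bundled crossing, then removing the
(at most 8) endpoints of the at most 4 frame edges leaves a graph all of whose connected
components are outerplanar; consequently `G` has treewidth at most 10. -/
theorem one_bundled_crossing_structure {V : Type} [Fintype V] (G : SimpleGraph V)
    (h : CircBundledLE G 1) :
    (∃ F : Finset (Sym2 V), F.card ≤ 4 ∧ (↑F : Set (Sym2 V)) ⊆ G.edgeSet ∧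
      ∀ c : (G.induce {v : V | ∀ e ∈ F, v ∉ e}).ConnectedComponent,
        Outerplanar ((G.induce {v : V | ∀ e ∈ F, v ∉ e}).induce c.supp)) ∧
    TreewidthLE G 10 := by
  obtain ⟨f, hf, bundles, hsub, hleft, -, hcross, hcover⟩ := h
  have hG : IsSingleBundledCrossing G f (bundles 0).1 (bundles 0).2 :=
    ⟨(hsub 0).1, hleft 0, hcross 0, fun e he e' he' h => by
      simpa [Fin.fin_one_eq_zero] using hcover e he e' he' h⟩
  obtain ⟨F, hF, hFG, hsep⟩ := hG.exists_separating_frame hf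
  have hinj : Function.Injective (f ∘ (↑) : {v | ∀ e ∈ F, v ∉ e} → ℕ) :=
    hf.comp Subtype.val_injective
  refine ⟨⟨F, by omega, hFG, hsep.outerplanar_induce_supp hinj⟩, ?_⟩
  refine ((hsep.outerplanar hinj).treewidthLE_two.of_induce).mono ?_
  have := ncard_compl_setOf_forall_notMem_le F
  omega
end

section
/- If a graph G has a circular layout with exactly one bundled crossing (so that all crossings can be grouped into a single bundled crossing), then G is planar. -/
open SimpleGraph

/-- A crossing-free drawing of `G` in the plane: vertices are distinct points, edges are
arcs (paths) between their endpoints, arcs are injective, avoid other vertices, and two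
arcs of distinct edges meet only at shared endpoints. -/
structure PlaneEmbedding {V : Type} (G : SimpleGraph V) where
  pos : V → ℝ × ℝ
  pos_inj : Function.Injective pos
  arc : ∀ ⦃u v : V⦄, G.Adj u v → Path (pos u) (pos v)
  arc_symm : ∀ ⦃u v : V⦄ (h : G.Adj u v), arc h.symm = (arc h).symm
  arc_inj : ∀ ⦃u v : V⦄ (h : G.Adj u v), Function.Injective (arc h)
  arc_avoid : ∀ ⦃u v : V⦄ (h : G.Adj u v) (w : V),
    pos w ∈ Set.range (arc h) → w = u ∨ w = v
  arcs_meet : ∀ ⦃u v x y : V⦄ (h : G.Adj u v) (h' : G.Adj x y),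
    s(u, v) ≠ s(x, y) → ∀ p : ℝ × ℝ,
      p ∈ Set.range (arc h) → p ∈ Set.range (arc h') → p = pos u ∨ p = pos v

def IsPlanar {V : Type} (G : SimpleGraph V) : Prop := Nonempty (PlaneEmbedding G)

/-!
Keep the vertex order `f` and put the second bundle `B` on a second page: two edges on the same
page never cross, since edges of `B` are pairwise non-crossing and every crossing pair has an edge
in `B`. Draw vertex `v` at `(f v, 0)` and each edge as the semicircle over its endpoints, above
the axis if it is not in `B` and below it otherwise. The circle with diameter `[a, b]` is
`(x - a) (x - b) + y ^ 2 = 0`; subtracting two such equations leaves a linear one, from which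
one reads off that two such circles meet off the axis only if their diameters are equal or
interleave.
-/

open Real

noncomputable def semicircle (a b ε : ℝ) : Path ((a, 0) : ℝ × ℝ) (b, 0) where
  toFun t := ((a + b) / 2 - (b - a) / 2 * cos (π * t), ε * (|b - a| / 2) * sin (π * t))
  continuous_toFun := by fun_prop
  source' := by simp; ring
  target' := by simp; ring

namespace semicircle

variable {a b ε : ℝ}

lemma apply (t : unitInterval) :
    semicircle a b ε t =
      ((a + b) / 2 - (b - a) / 2 * cos (π * t), ε * (|b - a| / 2) * sin (π * t)) :=
  rfl

lemma symm : (semicircle a b ε).symm = semicircle b a ε := by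
  refine Path.ext (funext fun t => ?_)
  simp only [Path.symm_apply, Function.comp_apply, apply, unitInterval.coe_symm_eq, mul_sub,
    mul_one, cos_pi_sub, sin_pi_sub, abs_sub_comm a b]
  ext <;> ring

lemma injective (hab : a ≠ b) : Function.Injective (semicircle a b ε) := by
  intro s t hst
  have hcos : cos (π * s) = cos (π * t) := by
    have h := congrArg Prod.fst hst
    simp only [apply] at h
    have hba : (b - a) / 2 ≠ 0 := by intro h; apply hab; linarith
    exact mul_left_cancel₀ hba (by linarith)
  have mem_Icc (r : unitInterval) : π * r ∈ Set.Icc 0 π :=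
    ⟨by have := r.2.1; positivity, by nlinarith [r.2.2, pi_pos]⟩
  exact Subtype.ext (mul_left_cancel₀ pi_ne_zero (injOn_cos (mem_Icc s) (mem_Icc t) hcos))

lemma mem_circle (hε : ε ^ 2 = 1) {p : ℝ × ℝ} (hp : p ∈ Set.range (semicircle a b ε)) :
    (p.1 - a) * (p.1 - b) + p.2 ^ 2 = 0 := by
  obtain ⟨t, rfl⟩ := hp
  simp only [apply]
  linear_combination ((b - a) / 2) ^ 2 * sin_sq_add_cos_sq (π * t) +
    (|b - a| / 2) ^ 2 * sin (π * t) ^ 2 * hε + sin (π * t) ^ 2 / 4 * sq_abs (b - a)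

lemma side_nonneg {p : ℝ × ℝ} (hp : p ∈ Set.range (semicircle a b ε)) : 0 ≤ ε * p.2 := by
  obtain ⟨t, rfl⟩ := hp
  have hsin : 0 ≤ sin (π * t) :=
    sin_nonneg_of_nonneg_of_le_pi (by have := t.2.1; positivity) (by nlinarith [t.2.2, pi_pos])
  calc 0 ≤ ε ^ 2 * (|b - a| / 2) * sin (π * t) := by positivity
    _ = ε * (semicircle a b ε t).2 := by simp only [apply]; ring

end semicircle

lemma power_eq_of_circles_meet {a b c d x y : ℝ}
    (h₁ : (x - a) * (x - b) + y ^ 2 = 0) (h₂ : (x - c) * (x - d) + y ^ 2 = 0) :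
    (c - a) * (c - b) = (c + d - (a + b)) * (c - x) := by
  linear_combination h₁ - h₂

lemma power_eq_zero_or_mul_neg_of_circles_meet {a b c d x y : ℝ} (hy : y ≠ 0)
    (h₁ : (x - a) * (x - b) + y ^ 2 = 0) (h₂ : (x - c) * (x - d) + y ^ 2 = 0) :
    ((c - a) * (c - b) = 0 ∧ (d - a) * (d - b) = 0) ∨
      (c - a) * (c - b) * ((d - a) * (d - b)) < 0 := by
  have hc := power_eq_of_circles_meet h₁ h₂
  have hd := power_eq_of_circles_meet (c := d) (d := c) h₁ (by linear_combination h₂)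
  rcases eq_or_ne (c + d - (a + b)) 0 with hk | hk
  · left
    rw [hc, hd, add_comm d, hk]
    simp
  · right
    rw [hc, hd, add_comm d c]
    calc (c + d - (a + b)) * (c - x) * ((c + d - (a + b)) * (d - x))
        = -((c + d - (a + b)) ^ 2 * y ^ 2) := by linear_combination (c + d - (a + b)) ^ 2 * h₂
      _ < 0 := neg_neg_of_pos (by positivity)

section Layout

variable {V : Type}

lemma strictBtw_iff_mul_neg {a b c : ℕ} : StrictBtw a b c ↔ ((b : ℝ) - a) * (b - c) < 0 := by
  simp only [StrictBtw, mul_neg_iff, sub_pos, sub_neg, Nat.cast_lt]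
  omega

lemma eq_or_eq_of_power_eq_zero {f : V → ℕ} (hf : Function.Injective f) {u v w : V}
    (h : ((f w : ℝ) - f u) * (f w - f v) = 0) : w = u ∨ w = v := by
  simpa [sub_eq_zero, hf.eq_iff] using h

lemma edgesCross_of_circles_meet {f : V → ℕ} (hf : Function.Injective f) {u v w z : V}
    (hne : s(u, v) ≠ s(w, z)) {x y : ℝ} (hy : y ≠ 0)
    (h₁ : (x - f u) * (x - f v) + y ^ 2 = 0) (h₂ : (x - f w) * (x - f z) + y ^ 2 = 0) :
    EdgesCross f s(u, v) s(w, z) := by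
  rcases power_eq_zero_or_mul_neg_of_circles_meet hy h₁ h₂ with ⟨hw, hz⟩ | hneg
  · have hwz : w ≠ z := by
      rintro rfl
      exact hy (pow_eq_zero_iff two_ne_zero |>.1 (by nlinarith [sq_nonneg (x - f w)]))
    refine absurd ((Sym2.mem_and_mem_iff hwz).1 ⟨?_, ?_⟩) hne <;> rw [Sym2.mem_iff]
    exacts [eq_or_eq_of_power_eq_zero hf hw, eq_or_eq_of_power_eq_zero hf hz]
  · refine ⟨u, v, w, z, rfl, rfl, ?_, ?_, ?_, ?_, ?_⟩
    iterate 4 rintro rfl; simp at hneg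
    rw [ChordsCross, strictBtw_iff_mul_neg, strictBtw_iff_mul_neg]
    rcases mul_neg_iff.1 hneg with ⟨hw, hz⟩ | ⟨hw, hz⟩
    exacts [Or.inr ⟨hz, hw.not_gt⟩, Or.inl ⟨hw, hz.not_gt⟩]

def IsTwoPageLayout (G : SimpleGraph V) (f : V → ℕ) (B : Set (Sym2 V)) : Prop :=
  ∀ e ∈ G.edgeSet, ∀ e' ∈ G.edgeSet, (e ∈ B ↔ e' ∈ B) → ¬ EdgesCross f e e'

lemma exists_isTwoPageLayout_of_circBundledLE_one {G : SimpleGraph V} (h : CircBundledLE G 1) :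
    ∃ f, Function.Injective f ∧ ∃ B, IsTwoPageLayout G f B := by
  obtain ⟨f, hf, bundles, -, -, hB₂, -, hcover⟩ := h
  refine ⟨f, hf, (bundles 0).2, fun e he e' he' hiff hcross => ?_⟩
  by_cases heB : e ∈ (bundles 0).2
  · exact hB₂ 0 e heB e' (hiff.1 heB) hcross
  · obtain ⟨i, hi⟩ := hcover e he e' he' hcross
    rw [Subsingleton.elim i 0] at hi
    rcases hi with ⟨-, he'B⟩ | ⟨-, heB'⟩
    exacts [heB (hiff.2 he'B), heB heB']

open Classical in
noncomputable def page (B : Set (Sym2 V)) (e : Sym2 V) : ℝ := if e ∈ B then -1 else 1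

lemma page_sq (B : Set (Sym2 V)) (e : Sym2 V) : page B e ^ 2 = 1 := by
  unfold page; split_ifs <;> norm_num

lemma mem_iff_mem_of_page_mul_nonneg {B : Set (Sym2 V)} {e e' : Sym2 V} {y : ℝ} (hy : y ≠ 0)
    (h : 0 ≤ page B e * y) (h' : 0 ≤ page B e' * y) : e ∈ B ↔ e' ∈ B := by
  unfold page at h h'
  split_ifs at h h' with he he' he'
  · exact iff_of_true he he'
  · exact absurd (by linarith) hy
  · exact absurd (by linarith) hy
  · exact iff_of_false he he'

lemma isPlanar_of_isTwoPageLayout {G : SimpleGraph V} {f : V → ℕ} (hf : Function.Injective f)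
    {B : Set (Sym2 V)} (hB : IsTwoPageLayout G f B) : IsPlanar G := by
  refine ⟨{ pos := fun v => ((f v : ℝ), 0)
            arc := fun u v _ => semicircle (f u) (f v) (page B s(u, v))
            pos_inj := fun u v huv => hf (by simpa using huv)
            arc_symm := fun u v _ => by simp only [Sym2.eq_swap, semicircle.symm]
            arc_inj := fun u v huv => semicircle.injective (by simpa [hf.eq_iff] using huv.ne)
            arc_avoid := fun u v _ w hw => eq_or_eq_of_power_eq_zero hf
              (by simpa using semicircle.mem_circle (page_sq B _) hw)
            arcs_meet := ?_ }⟩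
  intro u v w z huv hwz hne p hp hp'
  have h₁ := semicircle.mem_circle (page_sq B _) hp
  by_cases hy : p.2 = 0
  · rw [hy, zero_pow two_ne_zero, add_zero, mul_eq_zero, sub_eq_zero, sub_eq_zero] at h₁
    exact h₁.imp (fun h => Prod.ext h hy) (fun h => Prod.ext h hy)
  · exact (hB _ huv _ hwz (mem_iff_mem_of_page_mul_nonneg hy (semicircle.side_nonneg hp)
      (semicircle.side_nonneg hp')) (edgesCross_of_circles_meet hf hne hy h₁
        (semicircle.mem_circle (page_sq B _) hp'))).elim

end Layout

theorem planar_of_circBundledLE_one_general {V : Type} (G : SimpleGraph V)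
    (h : CircBundledLE G 1) : IsPlanar G := by
  obtain ⟨f, hf, B, hB⟩ := exists_isTwoPageLayout_of_circBundledLE_one h
  exact isPlanar_of_isTwoPageLayout hf hB

/-- If a graph has a circular layout with (at most) one bundled crossing, grouping all
crossings, then it is planar. -/
theorem planar_of_circBundledLE_one {V : Type} [Fintype V] (G : SimpleGraph V)
    (h : CircBundledLE G 1) : IsPlanar G :=
  planar_of_circBundledLE_one_general G h
end
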